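/- For any partition λ of n ≥ 1, the identity n!/H(λ) = ∑_v (n-1)!/H(λ−v) holds, where the sum is over all corner cells v of λ, H(μ) denotes the product of all hook lengths of μ, and λ−v is the partition obtained by removing the corner v. -/

import Mathlib

open scoped BigOperators


/-- The cells of the Young diagram of a partition given as a list of row lengths:
cell `(i, j)` is present iff `j` is less than the `i`-th row length. -/
def ptCells (l : List ℕ) : Finset (ℕ × ℕ) :=
  (Finset.range l.length).biUnion fun i => ({i} : Finset ℕ) ×ˢ Finset.range (l.getD i 0)

/-- A standard Young tableau of shape `l`: a bijective filling of the cells by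
`{0,…,n-1}` (equivalently `{1,…,n}`) strictly increasing along rows and columns. -/
def IsSYT (l : List ℕ) (T : ptCells l → Fin l.sum) : Prop :=
  Function.Bijective T ∧
    (∀ c d : ptCells l,
      (c : ℕ × ℕ).1 = (d : ℕ × ℕ).1 → (c : ℕ × ℕ).2 < (d : ℕ × ℕ).2 → T c < T d) ∧
    (∀ c d : ptCells l,
      (c : ℕ × ℕ).2 = (d : ℕ × ℕ).2 → (c : ℕ × ℕ).1 < (d : ℕ × ℕ).1 → T c < T d)

/-- `f^λ`: the number of standard Young tableaux of shape `l`. -/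
noncomputable def sytCount (l : List ℕ) : ℕ :=
  Nat.card {T : ptCells l → Fin l.sum // IsSYT l T}

/-- The row lengths of a partition of `n`, as a weakly decreasing list. -/
def partList {n : ℕ} (μ : n.Partition) : List ℕ := μ.parts.sort (· ≥ ·)

/-- The hook length of cell `c = (i,j)`: 1 + the number of cells strictly to the right
in row `i` + the number of cells strictly below in column `j`. -/
def hookLen (l : List ℕ) (c : ℕ × ℕ) : ℕ :=
  (l.getD c.1 0 - c.2 - 1) +
    ((Finset.range l.length).filter fun i => c.1 < i ∧ c.2 < l.getD i 0).card + 1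

/-- The diagram obtained by removing one cell from the end of row `i`. -/
def removeCell (l : List ℕ) (i : ℕ) : List ℕ := l.set i (l.getD i 0 - 1)

/-- The corners of the diagram `l`: the cells of hook length `1`. -/
def corners (l : List ℕ) : Finset (ℕ × ℕ) := (ptCells l).filter fun c => hookLen l c = 1

/-- Hook product `H(λ) = ∏_{u ∈ λ} h(u)`. -/
def hookProd (l : List ℕ) : ℕ := ∏ c ∈ ptCells l, hookLen l c


open Finset

open Polynomial

variable {F : Type*} [Field F] {ι : Type*} [DecidableEq ι]

lemma monic_prod_XsubC (s : Finset ι) (w : ι → F) : (∏ i ∈ s, (X - C (w i))).Monic :=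
  monic_prod_of_monic _ _ fun i _ => monic_X_sub_C (w i)

lemma natDegree_prod_XsubC (s : Finset ι) (w : ι → F) :
    (∏ i ∈ s, (X - C (w i))).natDegree = s.card := by
  rw [natDegree_prod _ _ (fun i _ => X_sub_C_ne_zero (w i))]
  simp

lemma coeff_prod_XsubC_card (s : Finset ι) (w : ι → F) :
    (∏ i ∈ s, (X - C (w i))).coeff s.card = 1 := by
  have h := (monic_prod_XsubC s w).coeff_natDegree
  rwa [natDegree_prod_XsubC] at h

lemma coeff_prod_XsubC_gt (s : Finset ι) (w : ι → F) {d : ℕ} (hd : s.card < d) :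
    (∏ i ∈ s, (X - C (w i))).coeff d = 0 := by
  apply coeff_eq_zero_of_natDegree_lt
  rwa [natDegree_prod_XsubC]

lemma coeffE1 (s : Finset ι) (w : ι → F) (hs : s.Nonempty) :
    (∏ i ∈ s, (X - C (w i))).coeff (s.card - 1) = -∑ i ∈ s, w i := by
  have h := Monic.nextCoeff_prod s (fun i => X - C (w i)) (fun i _ => monic_X_sub_C (w i))
  rw [nextCoeff_of_natDegree_pos (by rw [natDegree_prod_XsubC]; exact hs.card_pos),
    natDegree_prod_XsubC] at h
  rw [h]
  simp [nextCoeff_X_sub_C]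

lemma coeffE2diff : ∀ (s : Finset ι) (w : ι → F) (k : ℕ), s.card = k + 2 →
    (∏ i ∈ s, (X - C (w i + 1))).coeff k - (∏ i ∈ s, (X - C (w i))).coeff k
      = ((k+2).choose 2 : F) + (k+1) * ∑ i ∈ s, w i := by
  intro s
  induction s using Finset.induction_on with
  | empty => intro w k hk; simp at hk
  | @insert a s ha ih =>
    intro w k hk
    rw [card_insert_of_notMem ha] at hk
    have hs : s.card = k + 1 := by omega
    match k with
    | 0 =>
      obtain ⟨b, rfl⟩ := card_eq_one.1 hs
      have hab : a ≠ b := by rintro rfl; simp at ha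
      rw [prod_insert ha, prod_insert ha, prod_singleton, prod_singleton,
        sum_insert ha, sum_singleton]
      simp only [mul_coeff_zero, coeff_sub, coeff_X_zero, coeff_C, if_pos rfl]
      norm_num
      ring
    | k + 1 =>
      rw [prod_insert ha, prod_insert ha, mul_comm (X - C (w a + 1)), mul_comm (X - C (w a)),
        coeff_mul_X_sub_C, coeff_mul_X_sub_C]
      have hM1 : (∏ i ∈ s, (X - C (w i + 1))).coeff (k + 1) = -(∑ i ∈ s, w i) - (k + 2) := by
        have := coeffE1 s (fun i => w i + 1) (card_pos.1 (by omega))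
        rw [hs] at this
        simp only [Nat.add_sub_cancel] at this
        rw [this, sum_add_distrib, sum_const, hs]
        push_cast
        ring
      have hN1 : (∏ i ∈ s, (X - C (w i))).coeff (k + 1) = -(∑ i ∈ s, w i) := by
        have := coeffE1 s w (card_pos.1 (by omega))
        rw [hs] at this
        simpa using this
      have hih := ih w k (by omega)
      rw [hM1, hN1, sum_insert ha]
      have hch : ((k + 1 + 2).choose 2 : F) = ((k+2).choose 2 : F) + (k + 2) := by
        have : (k + 1 + 2).choose 2 = (k + 2).choose 2 + (k + 2) := by
          rw [Nat.choose_succ_succ (k+2) 1, Nat.choose_one_right]; ring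
        rw [this]; push_cast; ring
      rw [hch]
      push_cast
      linear_combination hih

lemma sum_eval_mul_nodalWeight (s : Finset ι) (v : ι → F) (hv : Set.InjOn v s)
    (f : F[X]) (hf : f.degree < s.card) :
    ∑ i ∈ s, f.eval (v i) * Lagrange.nodalWeight s v i = f.coeff (s.card - 1) := by
  conv_rhs => rw [Lagrange.eq_interpolate hv hf]
  rw [Lagrange.interpolate_apply, finset_sum_coeff]
  refine (sum_congr rfl fun i hi => ?_).symm
  rw [coeff_C_mul]
  congr 1
  have hnd := Lagrange.natDegree_basis hv hi
  have hlc : (Lagrange.basis s v i).coeff (s.card - 1) = (Lagrange.basis s v i).leadingCoeff := by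
    rw [leadingCoeff, hnd]
  rw [hlc, Lagrange.basis, leadingCoeff_prod, Lagrange.nodalWeight]
  refine prod_congr rfl fun j hj => ?_
  have hji : v i ≠ v j := by
    intro h
    exact (mem_erase.1 hj).1 (hv (mem_erase.1 hj).2 hi h.symm)
  rw [Lagrange.basisDivisor, leadingCoeff_mul, leadingCoeff_C,
    (monic_X_sub_C (v j)).leadingCoeff, mul_one]

lemma alg_key (s : Finset ι) (v : ι → F) (hv : Set.InjOn v s) :
    ∑ k ∈ s, v k * ∏ i ∈ s.erase k, ((v k - 1 - v i) / (v k - v i))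
      = (∑ i ∈ s, v i) - (s.card.choose 2 : F) := by
  classical
  rcases hcard : s.card with _ | _ | k
  · rw [card_eq_zero.1 hcard]; simp
  · obtain ⟨a, rfl⟩ := card_eq_one.1 hcard; simp
  have hcard : s.card = k + 2 := hcard
  set M : F[X] := ∏ i ∈ s, (X - C (v i + 1)) with hM
  set N : F[X] := ∏ i ∈ s, (X - C (v i)) with hN
  set P : F[X] := X * M with hP
  set R : F[X] := P - N * (X - C ((k : F) + 2)) with hR
  have hsne : s.Nonempty := card_pos.1 (by omega)
  have cN1 : N.coeff (k + 1) = -∑ i ∈ s, v i := by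
    have := coeffE1 s v hsne
    rwa [show s.card - 1 = k + 1 by omega] at this
  have cM1 : M.coeff (k + 1) = -(∑ i ∈ s, v i) - ((k : F) + 2) := by
    have := coeffE1 s (fun i => v i + 1) hsne
    rw [show s.card - 1 = k + 1 by omega] at this
    rw [hM, this, sum_add_distrib, sum_const, hcard]
    push_cast
    ring
  have cNm : N.coeff (k + 2) = 1 := by
    have := coeff_prod_XsubC_card s v; rwa [hcard] at this
  have cMm : M.coeff (k + 2) = 1 := by
    have := coeff_prod_XsubC_card s (fun i => v i + 1); rwa [hcard] at this
  have cNgt : ∀ d, k + 2 < d → N.coeff d = 0 := fun d hd =>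
    coeff_prod_XsubC_gt s v (by omega)
  have cMgt : ∀ d, k + 2 < d → M.coeff d = 0 := fun d hd =>
    coeff_prod_XsubC_gt s (fun i => v i + 1) (by omega)
  have hdegR : R.degree < (s.card : ℕ) := by
    rw [hcard, degree_lt_iff_coeff_zero]
    intro d hd
    have hd' : k + 2 ≤ d := by exact_mod_cast hd
    obtain ⟨e, rfl⟩ : ∃ e, d = e + 1 := ⟨d - 1, by omega⟩
    rw [hR, coeff_sub, hP, coeff_X_mul, coeff_mul_X_sub_C]
    rcases Nat.lt_or_ge e (k + 2) with he | he
    · have : e = k + 1 := by omega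
      subst this
      rw [cM1, cN1, cNm]
      ring
    · rcases Nat.eq_or_lt_of_le he with he' | he'
      · have he2 : e = k + 2 := he'.symm
        subst he2
        rw [cMm, cNm, cNgt (k + 2 + 1) (by omega)]
        ring
      · rw [cMgt e he', cNgt e he', cNgt (e + 1) (by omega)]
        ring
  have hterm : ∀ j ∈ s, v j * ∏ i ∈ s.erase j, ((v j - 1 - v i) / (v j - v i))
      = -(P.eval (v j)) * Lagrange.nodalWeight s v j := by
    intro j hj
    have hPe : P.eval (v j) = -(v j * ∏ i ∈ s.erase j, (v j - 1 - v i)) := by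
      rw [hP, hM, eval_mul, eval_X, eval_prod]
      simp only [eval_sub, eval_X, eval_C]
      rw [← Finset.mul_prod_erase _ _ hj]
      rw [show (∏ i ∈ s.erase j, (v j - (v i + 1))) = ∏ i ∈ s.erase j, (v j - 1 - v i) from
        prod_congr rfl fun i _ => by ring]
      ring
    rw [hPe]
    simp only [Lagrange.nodalWeight]
    rw [prod_inv_distrib, prod_div_distrib, div_eq_mul_inv]
    ring
  rw [sum_congr rfl hterm]
  have hNeval : ∀ j ∈ s, N.eval (v j) = 0 := by
    intro j hj
    rw [hN, eval_prod]
    exact Finset.prod_eq_zero hj (by simp)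
  have hPR : ∀ j ∈ s, P.eval (v j) = R.eval (v j) := by
    intro j hj
    have h0 : (N * (X - C ((k : F) + 2))).eval (v j) = 0 := by
      rw [eval_mul, hNeval j hj, zero_mul]
    rw [hR, eval_sub, h0, sub_zero]
  have hsum : ∑ j ∈ s, -(P.eval (v j)) * Lagrange.nodalWeight s v j
      = -∑ j ∈ s, R.eval (v j) * Lagrange.nodalWeight s v j := by
    rw [← sum_neg_distrib]
    exact sum_congr rfl fun j hj => by rw [hPR j hj]; ring
  rw [hsum, sum_eval_mul_nodalWeight s v hv R hdegR,
    show s.card - 1 = k + 1 by omega]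
  simp only [show k + 1 + 1 = k + 2 from rfl]
  have hE2 := coeffE2diff s v k hcard
  rw [hR, coeff_sub, hP, coeff_X_mul, coeff_mul_X_sub_C, cN1]
  have hMk : M.coeff k = N.coeff k + (((k+2).choose 2 : F) + (k+1) * ∑ i ∈ s, v i) := by
    rw [hM, hN]
    linear_combination hE2
  rw [hMk]
  push_cast
  ring


/-- beta numbers -/
def bet (l : List ℕ) (i : ℕ) : ℕ := l.getD i 0 + (l.length - 1 - i)

lemma sorted_getD {l : List ℕ} (hs : l.Pairwise (· ≥ ·)) {i j : ℕ} (hij : i ≤ j)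
    (hj : j < l.length) : l.getD j 0 ≤ l.getD i 0 := by
  have hi : i < l.length := lt_of_le_of_lt hij hj
  rw [List.getD_eq_getElem _ _ hi, List.getD_eq_getElem _ _ hj]
  rcases eq_or_lt_of_le hij with rfl | h
  · exact le_refl _
  · exact hs.rel_get_of_lt (a := ⟨i, hi⟩) (b := ⟨j, hj⟩) h

lemma bet_lt_bet {l : List ℕ} (hs : l.Pairwise (· ≥ ·)) {i j : ℕ} (hij : i < j)
    (hj : j < l.length) : bet l j < bet l i := by
  have h1 := sorted_getD hs (le_of_lt hij) hj
  unfold bet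
  omega

lemma mem_ptCells {l : List ℕ} {a b : ℕ} :
    (a, b) ∈ ptCells l ↔ a < l.length ∧ b < l.getD a 0 := by
  simp only [ptCells, mem_biUnion, mem_range, mem_product, mem_singleton]
  constructor
  · rintro ⟨i, hi, rfl, h2⟩; exact ⟨hi, h2⟩
  · rintro ⟨h1, h2⟩; exact ⟨a, h1, rfl, h2⟩

lemma hookProd_eq (l : List ℕ) :
    hookProd l = ∏ i ∈ range l.length, ∏ j ∈ range (l.getD i 0), hookLen l (i, j) := by
  rw [hookProd, ptCells, prod_biUnion]
  · refine prod_congr rfl fun i _ => ?_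
    rw [prod_product]
    simp
  · intro x _ y _ hxy
    simp only [Finset.disjoint_left]
    rintro ⟨a, b⟩ hab hab'
    simp only [mem_product, mem_singleton] at hab hab'
    exact hxy (hab.1.symm.trans hab'.1)

/-- number of later rows with length ≤ j -/
def cnt (l : List ℕ) (i j : ℕ) : ℕ :=
  ((Finset.Ioo i l.length).filter fun t => l.getD t 0 ≤ j).card

lemma cnt_le (l : List ℕ) (i j : ℕ) : cnt l i j ≤ l.length - i - 1 := by
  have := Finset.card_filter_le (Finset.Ioo i l.length) (fun t => l.getD t 0 ≤ j)
  rwa [Nat.card_Ioo] at this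

lemma hookLen_eq {l : List ℕ} {i j : ℕ} (hi : i < l.length) (hj : j < l.getD i 0) :
    hookLen l (i, j) = bet l i - (j + cnt l i j) := by
  have hsplit : (range l.length).filter (fun t => i < t ∧ j < l.getD t 0)
      = (Finset.Ioo i l.length).filter fun t => ¬ (l.getD t 0 ≤ j) := by
    ext t
    simp only [mem_filter, mem_range, Finset.mem_Ioo, not_le]
    tauto
  have hcard := Finset.card_filter_add_card_filter_not
    (s := Finset.Ioo i l.length) (p := fun t => l.getD t 0 ≤ j)
  rw [Nat.card_Ioo] at hcard
  have hc := cnt_le l i j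
  have hform : hookLen l (i, j) = (l.getD i 0 - j - 1) +
      ((range l.length).filter fun t => i < t ∧ j < l.getD t 0).card + 1 := rfl
  rw [hform, hsplit]
  have : ((Finset.Ioo i l.length).filter fun t => ¬ (l.getD t 0 ≤ j)).card
      = l.length - i - 1 - cnt l i j := by
    unfold cnt at *
    omega
  rw [this]
  unfold bet
  omega

/-- the complement position map -/
def sfun (l : List ℕ) (i j : ℕ) : ℕ := j + cnt l i j

lemma cnt_mono (l : List ℕ) (i : ℕ) {j1 j2 : ℕ} (h : j1 ≤ j2) : cnt l i j1 ≤ cnt l i j2 := by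
  apply Finset.card_le_card
  intro t ht
  simp only [mem_filter] at ht ⊢
  exact ⟨ht.1, by omega⟩

lemma sfun_strictMono (l : List ℕ) (i : ℕ) {j1 j2 : ℕ} (h : j1 < j2) :
    sfun l i j1 < sfun l i j2 := by
  have := cnt_mono l i (le_of_lt h)
  unfold sfun
  omega

lemma sfun_lt_bet {l : List ℕ} {i j : ℕ} (hi : i < l.length) (hj : j < l.getD i 0) :
    sfun l i j < bet l i := by
  have := cnt_le l i j
  unfold sfun bet
  omega

lemma sfun_ne_bet {l : List ℕ} (hs : l.Pairwise (· ≥ ·)) {i j t : ℕ}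
    (hj : j < l.getD i 0) (ht : t ∈ Finset.Ioo i l.length) :
    sfun l i j ≠ bet l t := by
  rw [Finset.mem_Ioo] at ht
  rcases Nat.lt_or_ge j (l.getD t 0) with hc | hc
  · -- j < l_t : cnt ≤ l.length - 1 - t, sfun < bet t
    have hsub : ((Finset.Ioo i l.length).filter fun u => l.getD u 0 ≤ j) ⊆
        Finset.Ioo t l.length := by
      intro u hu
      simp only [mem_filter, Finset.mem_Ioo] at hu ⊢
      refine ⟨?_, hu.1.2⟩
      by_contra hut
      push_neg at hut
      have := sorted_getD hs hut ht.2
      omega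
    have hcard := Finset.card_le_card hsub
    rw [Nat.card_Ioo] at hcard
    unfold sfun bet cnt at *
    omega
  · -- l_t ≤ j : cnt ≥ l.length - t, sfun > bet t
    have hsub : Finset.Ico t l.length ⊆
        ((Finset.Ioo i l.length).filter fun u => l.getD u 0 ≤ j) := by
      intro u hu
      simp only [Finset.mem_Ico] at hu
      simp only [mem_filter, Finset.mem_Ioo]
      have := sorted_getD hs hu.1 hu.2
      exact ⟨⟨by omega, hu.2⟩, by omega⟩
    have hcard := Finset.card_le_card hsub
    rw [Nat.card_Ico] at hcard
    unfold sfun bet cnt at *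
    omega

lemma prod_range_sub_eq_factorial (b : ℕ) : ∏ x ∈ range b, (b - x) = b.factorial := by
  rw [← Finset.prod_range_reflect]
  rw [← Finset.prod_range_add_one_eq_factorial]
  refine prod_congr rfl fun j hj => ?_
  rw [mem_range] at hj
  omega

/-- Row lemma -/
lemma row_prod {l : List ℕ} (hs : l.Pairwise (· ≥ ·)) {i : ℕ} (hi : i < l.length) :
    (∏ j ∈ range (l.getD i 0), hookLen l (i, j)) *
      (∏ t ∈ Finset.Ioo i l.length, (bet l i - bet l t)) = (bet l i).factorial := by
  classical
  set A : Finset ℕ := (range (l.getD i 0)).image (sfun l i) with hA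
  set B : Finset ℕ := (Finset.Ioo i l.length).image (bet l) with hB
  have hAcard : A.card = l.getD i 0 := by
    rw [hA, Finset.card_image_of_injOn, Finset.card_range]
    intro x _ y _ hxy
    by_contra hne
    rcases Nat.lt_or_ge x y with h | h
    · exact absurd hxy (Nat.ne_of_lt (sfun_strictMono l i h))
    · exact absurd hxy.symm (Nat.ne_of_lt (sfun_strictMono l i (by omega)))
  have hBcard : B.card = l.length - i - 1 := by
    rw [hB, Finset.card_image_of_injOn, Nat.card_Ioo]
    intro x hx y hy hxy
    rw [Finset.mem_coe, Finset.mem_Ioo] at hx hy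
    by_contra hne
    rcases Nat.lt_or_ge x y with h | h
    · exact absurd hxy.symm (Nat.ne_of_lt (bet_lt_bet hs h hy.2))
    · exact absurd hxy (Nat.ne_of_lt (bet_lt_bet hs (by omega) hx.2))
  have hdisj : Disjoint A B := by
    rw [Finset.disjoint_left]
    rintro a ha hb
    rw [hA, Finset.mem_image] at ha
    rw [hB, Finset.mem_image] at hb
    obtain ⟨j, hj, rfl⟩ := ha
    obtain ⟨t, ht, hbt⟩ := hb
    rw [mem_range] at hj
    exact sfun_ne_bet hs hj ht hbt.symm
  have hsub : A ∪ B ⊆ range (bet l i) := by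
    intro x hx
    rw [Finset.mem_union] at hx
    rw [mem_range]
    rcases hx with hx | hx
    · rw [hA, Finset.mem_image] at hx
      obtain ⟨j, hj, rfl⟩ := hx
      rw [mem_range] at hj
      exact sfun_lt_bet hi hj
    · rw [hB, Finset.mem_image] at hx
      obtain ⟨t, ht, rfl⟩ := hx
      rw [Finset.mem_Ioo] at ht
      exact bet_lt_bet hs ht.1 ht.2
  have hbet : bet l i = l.getD i 0 + (l.length - i - 1) := by
    unfold bet; omega
  have hunion : A ∪ B = range (bet l i) := by
    apply Finset.eq_of_subset_of_card_le hsub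
    rw [Finset.card_range, Finset.card_union_of_disjoint hdisj, hAcard, hBcard]
    omega
  have key : ∏ x ∈ range (bet l i), (bet l i - x)
      = (∏ j ∈ range (l.getD i 0), hookLen l (i, j)) *
        (∏ t ∈ Finset.Ioo i l.length, (bet l i - bet l t)) := by
    rw [← hunion, Finset.prod_union hdisj, hA, hB]
    congr 1
    · rw [Finset.prod_image]
      · refine prod_congr rfl fun j hj => ?_
        rw [mem_range] at hj
        rw [hookLen_eq hi hj]
        rfl
      · intro x hx y hy hxy
        by_contra hne
        rcases Nat.lt_or_ge x y with h | h
        · exact absurd hxy (Nat.ne_of_lt (sfun_strictMono l i h))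
        · exact absurd hxy.symm (Nat.ne_of_lt (sfun_strictMono l i (by omega)))
    · rw [Finset.prod_image]
      intro x hx y hy hxy
      rw [Finset.mem_coe, Finset.mem_Ioo] at hx hy
      by_contra hne
      rcases Nat.lt_or_ge x y with h | h
      · exact absurd hxy.symm (Nat.ne_of_lt (bet_lt_bet hs h hy.2))
      · exact absurd hxy (Nat.ne_of_lt (bet_lt_bet hs (by omega) hx.2))
  rw [← key, prod_range_sub_eq_factorial]

/-- main hook product formula -/
lemma hook_formula {l : List ℕ} (hs : l.Pairwise (· ≥ ·)) :
    hookProd l * ∏ i ∈ range l.length, ∏ t ∈ Finset.Ioo i l.length, (bet l i - bet l t)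
      = ∏ i ∈ range l.length, (bet l i).factorial := by
  rw [hookProd_eq, ← Finset.prod_mul_distrib]
  refine prod_congr rfl fun i hi => ?_
  rw [mem_range] at hi
  exact row_prod hs hi

/-- corner rows -/
def cornerRows (l : List ℕ) : Finset ℕ :=
  (range l.length).filter fun i =>
    0 < l.getD i 0 ∧ ∀ t ∈ Finset.Ioo i l.length, l.getD t 0 < l.getD i 0

lemma corners_eq (l : List ℕ) :
    corners l = (cornerRows l).image fun i => (i, l.getD i 0 - 1) := by
  classical
  ext ⟨a, b⟩
  simp only [corners, mem_filter, mem_ptCells, Finset.mem_image, cornerRows]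
  constructor
  · rintro ⟨⟨ha, hb⟩, hh⟩
    have hform : (l.getD a 0 - b - 1) +
        ((range l.length).filter fun t => a < t ∧ b < l.getD t 0).card + 1 = 1 := hh
    have h1 : l.getD a 0 - b - 1 = 0 := by omega
    have h2 : ((range l.length).filter fun t => a < t ∧ b < l.getD t 0).card = 0 := by omega
    rw [Finset.card_eq_zero, Finset.filter_eq_empty_iff] at h2
    refine ⟨a, ?_, ?_⟩
    · simp only [mem_filter, mem_range]
      refine ⟨ha, by omega, fun t ht => ?_⟩
      rw [Finset.mem_Ioo] at ht
      have := h2 (mem_range.2 ht.2)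
      simp only [not_and, not_lt] at this
      have := this ht.1
      omega
    · have : b = l.getD a 0 - 1 := by omega
      rw [this]
  · rintro ⟨i, hi, heq⟩
    simp only [mem_filter, mem_range] at hi
    obtain ⟨hilen, hipos, hcorner⟩ := hi
    obtain rfl : i = a := congrArg Prod.fst heq
    obtain rfl : l.getD i 0 - 1 = b := congrArg Prod.snd heq
    refine ⟨⟨hilen, by omega⟩, ?_⟩
    have hform : hookLen l (i, l.getD i 0 - 1) = (l.getD i 0 - (l.getD i 0 - 1) - 1) +
        ((range l.length).filter fun t => i < t ∧ l.getD i 0 - 1 < l.getD t 0).card + 1 := rfl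
    have h2 : ((range l.length).filter fun t => i < t ∧ l.getD i 0 - 1 < l.getD t 0) = ∅ := by
      rw [Finset.filter_eq_empty_iff]
      intro t ht
      rw [mem_range] at ht
      simp only [not_and, not_lt]
      intro hat
      have := hcorner t (Finset.mem_Ioo.2 ⟨hat, ht⟩)
      omega
    rw [hform, h2]
    simp
    omega

lemma length_removeCell (l : List ℕ) (i : ℕ) : (removeCell l i).length = l.length :=
  List.length_set ..

lemma getD_removeCell_self {l : List ℕ} {i : ℕ} (hi : i < l.length) :
    (removeCell l i).getD i 0 = l.getD i 0 - 1 := by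
  rw [removeCell, List.getD_eq_getElem _ _ (by rw [List.length_set]; exact hi),
    List.getElem_set_self]

lemma getD_removeCell_ne {l : List ℕ} {i t : ℕ} (ht : t ≠ i) :
    (removeCell l i).getD t 0 = l.getD t 0 := by
  rcases Nat.lt_or_ge t l.length with h | h
  · rw [removeCell, List.getD_eq_getElem _ _ (by rw [List.length_set]; exact h),
      List.getD_eq_getElem _ _ h, List.getElem_set_ne (by omega)]
  · rw [List.getD_eq_default _ _ (by rwa [length_removeCell]), List.getD_eq_default _ _ h]

lemma sorted_removeCell {l : List ℕ} (hs : l.Pairwise (· ≥ ·)) {i : ℕ} (hi : i ∈ cornerRows l) :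
    (removeCell l i).Pairwise (· ≥ ·) := by
  simp only [cornerRows, mem_filter, mem_range] at hi
  obtain ⟨hilen, hipos, hcorner⟩ := hi
  rw [List.pairwise_iff_getElem]
  intro u v hu0 hv0 huv
  have hu : u < l.length := by rwa [length_removeCell] at hu0
  have hv : v < l.length := by rwa [length_removeCell] at hv0
  have hgu : (removeCell l i)[u]'hu0 = (removeCell l i).getD u 0 :=
    (List.getD_eq_getElem _ _ hu0).symm
  have hgv : (removeCell l i)[v]'hv0 = (removeCell l i).getD v 0 :=
    (List.getD_eq_getElem _ _ hv0).symm
  rw [hgu, hgv]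
  have hsor := sorted_getD hs (le_of_lt huv) hv
  rcases eq_or_ne u i with rfl | hui
  · rw [getD_removeCell_self hu, getD_removeCell_ne (show v ≠ u by omega)]
    have := hcorner v (Finset.mem_Ioo.2 ⟨huv, hv⟩)
    omega
  · rw [getD_removeCell_ne hui]
    rcases eq_or_ne v i with rfl | hvi
    · rw [getD_removeCell_self hv]
      omega
    · rw [getD_removeCell_ne hvi]
      exact hsor

lemma bet_removeCell_self {l : List ℕ} {i : ℕ} (hi : i < l.length) (hpos : 0 < l.getD i 0) :
    bet (removeCell l i) i = bet l i - 1 := by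
  rw [bet, bet, length_removeCell, getD_removeCell_self hi]
  omega

lemma bet_removeCell_ne {l : List ℕ} {i t : ℕ} (ht : t ≠ i) :
    bet (removeCell l i) t = bet l t := by
  rw [bet, bet, length_removeCell, getD_removeCell_ne ht]

lemma bet_pos {l : List ℕ} {i : ℕ} (hi : i < l.length) (hpos : 0 < l.getD i 0) :
    0 < bet l i := by
  unfold bet; omega

open scoped Nat

lemma hookProd_pos (l : List ℕ) : 0 < hookProd l := by
  apply Finset.prod_pos
  intro c _
  unfold hookLen
  omega

/-- list sum as finset sum -/
lemma list_sum_eq (l : List ℕ) : ∑ i ∈ range l.length, l.getD i 0 = l.sum := by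
  induction l with
  | nil => simp
  | cons a l ih =>
    rw [List.length_cons, Finset.sum_range_succ', List.sum_cons]
    simp only [List.getD_cons_succ, List.getD_cons_zero]
    rw [ih]
    ring

lemma sum_bet (l : List ℕ) :
    ∑ i ∈ range l.length, bet l i = l.sum + l.length.choose 2 := by
  unfold bet
  rw [Finset.sum_add_distrib, list_sum_eq]
  congr 1
  have h1 : ∀ i ∈ range l.length, l.length - 1 - i = l.length - 1 - i := fun _ _ => rfl
  have := Finset.sum_range_reflect (fun j => j) l.length
  calc ∑ i ∈ range l.length, (l.length - 1 - i) = ∑ i ∈ range l.length, i := this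
    _ = l.length * (l.length - 1) / 2 := Finset.sum_range_id l.length
    _ = l.length.choose 2 := (Nat.choose_two_right l.length).symm

/-- the Q-version of the hook formula -/
lemma q_hook {l : List ℕ} (hs : l.Pairwise (· ≥ ·)) :
    (hookProd l : ℚ) *
      (∏ i ∈ range l.length, ∏ t ∈ Finset.Ioo i l.length, ((bet l i : ℚ) - bet l t))
      = ∏ i ∈ range l.length, ((bet l i)! : ℚ) := by
  have h := hook_formula hs
  have hcast : (∏ i ∈ range l.length, ∏ t ∈ Finset.Ioo i l.length, ((bet l i : ℚ) - bet l t))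
      = ((∏ i ∈ range l.length, ∏ t ∈ Finset.Ioo i l.length, (bet l i - bet l t) : ℕ) : ℚ) := by
    push_cast
    refine prod_congr rfl fun i hi => prod_congr rfl fun t ht => ?_
    rw [mem_range] at hi
    rw [Finset.mem_Ioo] at ht
    rw [Nat.cast_sub (le_of_lt (bet_lt_bet hs ht.1 ht.2))]
  rw [hcast, ← Nat.cast_mul, h]
  push_cast
  rfl

lemma delta_split (c : ℕ → ℚ) {i L : ℕ} (hi : i < L) :
    ∏ u ∈ range L, ∏ t ∈ Finset.Ioo u L, (c u - c t)
    = ((∏ u ∈ range i, (c u - c i)) * (∏ t ∈ Finset.Ioo i L, (c i - c t))) *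
      ((∏ u ∈ range i, ∏ t ∈ (Finset.Ioo u L).erase i, (c u - c t)) *
       (∏ u ∈ Finset.Ioo i L, ∏ t ∈ Finset.Ioo u L, (c u - c t))) := by
  rw [range_eq_Ico, range_eq_Ico, ← Finset.prod_Ico_consecutive _ (Nat.zero_le i) (le_of_lt hi)]
  rw [← Finset.mul_prod_erase (Finset.Ico i L) _ (Finset.mem_Ico.2 ⟨le_refl i, hi⟩),
    Finset.Ico_erase_left]
  have hinner : ∀ u ∈ Finset.Ico 0 i, ∏ t ∈ Finset.Ioo u L, (c u - c t)
      = (c u - c i) * ∏ t ∈ (Finset.Ioo u L).erase i, (c u - c t) := by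
    intro u hu
    rw [Finset.mem_Ico] at hu
    exact (Finset.mul_prod_erase _ _ (Finset.mem_Ioo.2 ⟨hu.2, hi⟩)).symm
  rw [prod_congr rfl hinner, prod_mul_distrib]
  ring

lemma erase_range_split {i L : ℕ} (hi : i < L) (f : ℕ → ℚ) :
    ∏ t ∈ (range L).erase i, f t = (∏ u ∈ range i, f u) * ∏ t ∈ Finset.Ioo i L, f t := by
  have hset : (range L).erase i = range i ∪ Finset.Ioo i L := by
    ext t
    simp only [Finset.mem_erase, mem_range, Finset.mem_union, Finset.mem_Ioo]
    omega
  rw [hset, Finset.prod_union]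
  rw [Finset.disjoint_left]
  intro t ht ht'
  rw [mem_range] at ht
  rw [Finset.mem_Ioo] at ht'
  omega

lemma key_ratio {l : List ℕ} (hs : l.Pairwise (· ≥ ·)) {i : ℕ} (hi : i ∈ cornerRows l) :
    (hookProd l : ℚ) * ∏ t ∈ (range l.length).erase i, ((bet l i : ℚ) - bet l t)
      = (hookProd (removeCell l i) : ℚ) * (bet l i : ℚ) *
        ∏ t ∈ (range l.length).erase i, ((bet l i : ℚ) - 1 - bet l t) := by
  classical
  obtain ⟨hilen, hipos, hcorner⟩ : i < l.length ∧ 0 < l.getD i 0 ∧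
      ∀ t ∈ Finset.Ioo i l.length, l.getD t 0 < l.getD i 0 := by
    simpa [cornerRows] using hi
  set L := l.length with hL
  set l' := removeCell l i with hl'
  have hs' : l'.Pairwise (· ≥ ·) := sorted_removeCell hs hi
  have hL' : l'.length = L := length_removeCell l i
  set c : ℕ → ℚ := fun t => (bet l t : ℚ) with hc
  set c' : ℕ → ℚ := fun t => (bet l' t : ℚ) with hc'
  have hbet1 : 0 < bet l i := bet_pos hilen hipos
  have hcne : ∀ t, t ≠ i → c' t = c t := fun t ht => by
    simp only [hc, hc', hl', bet_removeCell_ne ht]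
  have hci : c' i = c i - 1 := by
    have h1 : bet l' i = bet l i - 1 := bet_removeCell_self hilen hipos
    simp only [hc, hc', h1]
    have : (bet l i - 1 : ℕ) + 1 = bet l i := by omega
    have h2 : ((bet l i - 1 : ℕ) : ℚ) + 1 = (bet l i : ℚ) := by exact_mod_cast congrArg Nat.cast this
    linarith
  show (hookProd l : ℚ) * ∏ t ∈ (range L).erase i, (c i - c t)
      = (hookProd l' : ℚ) * c i * ∏ t ∈ (range L).erase i, (c i - 1 - c t)
  -- hook formulas for both
  have hq0 := q_hook hs
  have hq'0 := q_hook hs'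
  rw [hL'] at hq'0
  have hq : (hookProd l : ℚ) * ∏ u ∈ range L, ∏ t ∈ Finset.Ioo u L, (c u - c t)
      = ∏ t ∈ range L, ((bet l t)! : ℚ) := hq0
  have hq' : (hookProd l' : ℚ) * ∏ u ∈ range L, ∏ t ∈ Finset.Ioo u L, (c' u - c' t)
      = ∏ t ∈ range L, ((bet l' t)! : ℚ) := hq'0
  -- factorial ratio
  have hF : ∏ t ∈ range L, ((bet l t)! : ℚ)
      = (bet l i : ℚ) * ∏ t ∈ range L, ((bet l' t)! : ℚ) := by
    rw [← Finset.mul_prod_erase (range L) _ (mem_range.2 hilen),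
      ← Finset.mul_prod_erase (range L) (fun t => ((bet l' t)! : ℚ)) (mem_range.2 hilen)]
    have hrest : ∏ t ∈ (range L).erase i, ((bet l t)! : ℚ)
        = ∏ t ∈ (range L).erase i, ((bet l' t)! : ℚ) :=
      prod_congr rfl fun t ht => by
        rw [hl', bet_removeCell_ne (Finset.mem_erase.1 ht).1]
    rw [hrest]
    have hfac : ((bet l i)! : ℚ) = (bet l i : ℚ) * ((bet l' i)! : ℚ) := by
      rw [hl', bet_removeCell_self hilen hipos]
      rw [← Nat.mul_factorial_pred hbet1.ne']
      push_cast
      ring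
    rw [hfac]
    ring
  -- delta splits
  have hdl := delta_split c (L := L) hilen
  have hdl' := delta_split c' (L := L) hilen
  -- rest parts are equal
  have hrest1 : ∏ u ∈ range i, ∏ t ∈ (Finset.Ioo u L).erase i, (c' u - c' t)
      = ∏ u ∈ range i, ∏ t ∈ (Finset.Ioo u L).erase i, (c u - c t) := by
    refine prod_congr rfl fun u hu => prod_congr rfl fun t ht => ?_
    rw [mem_range] at hu
    rw [hcne u (by omega), hcne t (Finset.mem_erase.1 ht).1]
  have hrest2 : ∏ u ∈ Finset.Ioo i L, ∏ t ∈ Finset.Ioo u L, (c' u - c' t)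
      = ∏ u ∈ Finset.Ioo i L, ∏ t ∈ Finset.Ioo u L, (c u - c t) := by
    refine prod_congr rfl fun u hu => prod_congr rfl fun t ht => ?_
    rw [Finset.mem_Ioo] at hu ht
    rw [hcne u (by omega), hcne t (by omega)]
  -- rewrite primed split pieces
  have hA' : ∏ u ∈ range i, (c' u - c' i) = ∏ u ∈ range i, (c u - (c i - 1)) := by
    refine prod_congr rfl fun u hu => ?_
    rw [mem_range] at hu
    rw [hcne u (by omega), hci]
  have hB' : ∏ t ∈ Finset.Ioo i L, (c' i - c' t) = ∏ t ∈ Finset.Ioo i L, (c i - 1 - c t) := by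
    refine prod_congr rfl fun t ht => ?_
    rw [Finset.mem_Ioo] at ht
    rw [hcne t (by omega), hci]
  rw [hdl', hrest1, hrest2, hA', hB'] at hq'
  rw [hdl] at hq
  -- nonvanishing of delta factors
  have hbetinj : ∀ u t, u < t → t < L → c u ≠ c t := by
    intro u t hut htL
    have := bet_lt_bet hs hut htL
    simp only [hc]
    intro hEq
    have : bet l u = bet l t := by exact_mod_cast hEq
    omega
  -- goal after rewriting products over erase
  rw [erase_range_split hilen, erase_range_split hilen]
  -- abbreviations
  set P1 : ℚ := ∏ u ∈ range i, (c i - c u) with hP1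
  set P2 : ℚ := ∏ t ∈ Finset.Ioo i L, (c i - c t) with hP2
  set Q1 : ℚ := ∏ u ∈ range i, (c i - 1 - c u) with hQ1
  set Q2 : ℚ := ∏ t ∈ Finset.Ioo i L, (c i - 1 - c t) with hQ2
  set A1 : ℚ := ∏ u ∈ range i, (c u - c i) with hA1
  set A1' : ℚ := ∏ u ∈ range i, (c u - (c i - 1)) with hA1'
  set Rr : ℚ := (∏ u ∈ range i, ∏ t ∈ (Finset.Ioo u L).erase i, (c u - c t)) *
       (∏ u ∈ Finset.Ioo i L, ∏ t ∈ Finset.Ioo u L, (c u - c t)) with hRr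
  -- hq : H * (A1 * P2 * Rr) = F ; hq' : H' * (A1' * Q2 * Rr) = F'
  -- hF : F = c i * F'
  -- key per-factor identity
  have hkey : P1 * A1' = Q1 * A1 := by
    rw [hP1, hA1', hQ1, hA1, ← prod_mul_distrib, ← prod_mul_distrib]
    exact prod_congr rfl fun u _ => by ring
  -- Rr ≠ 0, P2 ≠ 0, A1 ≠ 0 etc not needed if we cross-multiply cleverly:
  -- target : H * (P1 * P2) = H' * c i * (Q1 * Q2)
  -- We have: H * (A1 * P2) * Rr = c i * F' and H' * (A1' * Q2) * Rr = F'
  -- multiply target by (A1' * A1 * Rr) ≠ 0 ... instead derive directly: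
  have hRrne : Rr ≠ 0 := by
    rw [hRr]
    apply mul_ne_zero
    · apply prod_ne_zero_iff.2
      intro u hu
      apply prod_ne_zero_iff.2
      intro t ht
      rw [mem_range] at hu
      have ht' := Finset.mem_of_mem_erase ht
      rw [Finset.mem_Ioo] at ht'
      exact sub_ne_zero.2 (hbetinj u t (by omega) ht'.2)
    · apply prod_ne_zero_iff.2
      intro u hu
      apply prod_ne_zero_iff.2
      intro t ht
      rw [Finset.mem_Ioo] at hu ht
      exact sub_ne_zero.2 (hbetinj u t ht.1 ht.2)
  have hA1ne : A1 ≠ 0 := by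
    rw [hA1]
    apply prod_ne_zero_iff.2
    intro u hu
    rw [mem_range] at hu
    exact sub_ne_zero.2 (hbetinj u i hu hilen)
  have hA1'ne : A1' ≠ 0 := by
    rw [hA1']
    apply prod_ne_zero_iff.2
    intro u hu
    rw [mem_range] at hu
    have hlt := bet_lt_bet hs hu hilen
    have hlt' : (bet l i : ℚ) < (bet l u : ℚ) := by exact_mod_cast hlt
    simp only [hc]
    intro hEq
    rw [sub_eq_zero] at hEq
    rw [hEq] at hlt'
    linarith
  -- now derive the goal
  have hgoal : (hookProd l : ℚ) * (P1 * P2) * (A1' * A1 * Rr)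
      = (hookProd l' : ℚ) * (bet l i : ℚ) * (Q1 * Q2) * (A1' * A1 * Rr) := by
    calc (hookProd l : ℚ) * (P1 * P2) * (A1' * A1 * Rr)
        = ((hookProd l : ℚ) * (A1 * P2 * Rr)) * (P1 * A1') := by ring
      _ = (∏ t ∈ range L, ((bet l t)! : ℚ)) * (P1 * A1') := by rw [hq]
      _ = ((bet l i : ℚ) * ∏ t ∈ range L, ((bet l' t)! : ℚ)) * (Q1 * A1) := by
          rw [hF, hkey]
      _ = ((bet l i : ℚ) * ((hookProd l' : ℚ) * (A1' * Q2 * Rr))) * (Q1 * A1) := by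
          rw [← hq']
      _ = (hookProd l' : ℚ) * (bet l i : ℚ) * (Q1 * Q2) * (A1' * A1 * Rr) := by ring
  have hfac_ne : A1' * A1 * Rr ≠ 0 := mul_ne_zero (mul_ne_zero hA1'ne hA1ne) hRrne
  exact mul_right_cancel₀ hfac_ne hgoal

lemma term_zero {l : List ℕ} (hs : l.Pairwise (· ≥ ·))
    (hpos : ∀ t, t < l.length → 0 < l.getD t 0) {i : ℕ} (hiL : i < l.length)
    (hni : i ∉ cornerRows l) :
    ∏ t ∈ (range l.length).erase i, (((bet l i : ℚ) - 1 - bet l t) / ((bet l i : ℚ) - bet l t))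
      = 0 := by
  have hex : ∃ t, t ∈ Finset.Ioo i l.length ∧ l.getD i 0 ≤ l.getD t 0 := by
    by_contra hcon
    push_neg at hcon
    exact hni (by
      simp only [cornerRows, mem_filter, mem_range]
      exact ⟨hiL, hpos i hiL, fun t ht => hcon t ht⟩)
  obtain ⟨t, ht, hle⟩ := hex
  rw [Finset.mem_Ioo] at ht
  have hi1L : i + 1 < l.length := by omega
  have h1 : l.getD t 0 ≤ l.getD (i+1) 0 := sorted_getD hs (by omega) ht.2
  have h2 : l.getD (i+1) 0 ≤ l.getD i 0 := sorted_getD hs (by omega) hi1L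
  have heq : l.getD (i+1) 0 = l.getD i 0 := by omega
  have hbet : bet l (i+1) + 1 = bet l i := by
    unfold bet
    rw [heq]
    have := hpos i hiL
    omega
  apply Finset.prod_eq_zero (i := i + 1)
  · rw [Finset.mem_erase, mem_range]
    exact ⟨by omega, hi1L⟩
  · have hz : (bet l i : ℚ) - 1 - bet l (i+1) = 0 := by
      have : ((bet l (i+1) : ℕ) : ℚ) + 1 = ((bet l i : ℕ) : ℚ) := by exact_mod_cast congrArg Nat.cast hbet
      linarith
    rw [hz, zero_div]


/-- Key inductive identity of the hook walk proof:
`n!/H(λ) = ∑_{v corner of λ} (n-1)!/H(λ - v)`. -/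
theorem hook_walk_identity (n : ℕ) (hn : 1 ≤ n) (μ : Nat.Partition n) :
    (Nat.factorial n : ℚ) / (hookProd (partList μ) : ℚ)
      = ∑ v ∈ corners (partList μ),
          (Nat.factorial (n - 1) : ℚ) / (hookProd (removeCell (partList μ) v.1) : ℚ) := by
  classical
  set l : List ℕ := partList μ with hldef
  have hsort : l.Pairwise (· ≥ ·) := μ.parts.pairwise_sort _
  have hsum : l.sum = n := by
    have h1 : (l : Multiset ℕ) = μ.parts := Multiset.sort_eq _ _
    have h2 : (l : Multiset ℕ).sum = l.sum := Multiset.sum_coe l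
    rw [← h2, h1, μ.parts_sum]
  have hpos : ∀ t, t < l.length → 0 < l.getD t 0 := by
    intro t ht
    rw [List.getD_eq_getElem _ _ ht]
    apply μ.parts_pos
    rw [← Multiset.mem_sort (· ≥ ·)]
    exact List.getElem_mem ht
  set L := l.length with hL
  set c : ℕ → ℚ := fun t => (bet l t : ℚ) with hc
  have hHne : (hookProd l : ℚ) ≠ 0 := Nat.cast_ne_zero.2 (hookProd_pos l).ne'
  have hcinj : Set.InjOn c (range L) := by
    intro x hx y hy hxy
    rw [Finset.coe_range, Set.mem_Iio] at hx hy
    by_contra hne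
    rcases Nat.lt_or_ge x y with h | h
    · have := bet_lt_bet hsort h hy
      simp only [hc] at hxy
      have : bet l x = bet l y := by exact_mod_cast hxy
      omega
    · have := bet_lt_bet hsort (show y < x by omega) hx
      simp only [hc] at hxy
      have : bet l x = bet l y := by exact_mod_cast hxy
      omega
  -- rewrite the sum over corners as a sum over corner rows
  rw [corners_eq]
  rw [Finset.sum_image (fun x hx y hy hxy => congrArg Prod.fst hxy)]
  -- per-term rewriting
  have hterm : ∀ i ∈ cornerRows l,
      (Nat.factorial (n-1) : ℚ) / (hookProd (removeCell l i) : ℚ)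
        = ((Nat.factorial (n-1) : ℚ) / (hookProd l : ℚ)) *
          (c i * ∏ t ∈ (range L).erase i, ((c i - 1 - c t) / (c i - c t))) := by
    intro i hi
    have hiL : i < L := by
      have := (mem_filter.1 hi).1
      rwa [mem_range] at this
    have hKR := key_ratio hsort hi
    have hH'ne : (hookProd (removeCell l i) : ℚ) ≠ 0 :=
      Nat.cast_ne_zero.2 (hookProd_pos _).ne'
    have hPdne : ∏ t ∈ (range L).erase i, (c i - c t) ≠ 0 := by
      apply prod_ne_zero_iff.2
      intro t ht
      rw [Finset.mem_erase, mem_range] at ht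
      apply sub_ne_zero.2
      intro hEq
      exact ht.1 (hcinj (by rw [Finset.coe_range, Set.mem_Iio]; exact ht.2)
        (by rw [Finset.coe_range, Set.mem_Iio]; exact hiL) hEq.symm)
    have hratio : ∏ t ∈ (range L).erase i, ((c i - 1 - c t) / (c i - c t))
        = (∏ t ∈ (range L).erase i, (c i - 1 - c t)) /
          (∏ t ∈ (range L).erase i, (c i - c t)) := prod_div_distrib _ _
    have hKR' : (hookProd l : ℚ) * ∏ t ∈ (range L).erase i, (c i - c t)
        = (hookProd (removeCell l i) : ℚ) * c i *
          ∏ t ∈ (range L).erase i, (c i - 1 - c t) := hKR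
    rw [hratio]
    field_simp
    linear_combination hKR'
  rw [Finset.sum_congr rfl hterm]
  rw [← Finset.mul_sum]
  -- extend the sum to all of range L
  have hext : ∑ i ∈ cornerRows l, (c i * ∏ t ∈ (range L).erase i, ((c i - 1 - c t) / (c i - c t)))
      = ∑ i ∈ range L, (c i * ∏ t ∈ (range L).erase i, ((c i - 1 - c t) / (c i - c t))) := by
    apply Finset.sum_subset
    · intro x hx
      exact (mem_filter.1 hx).1
    · intro x hx hnx
      rw [mem_range] at hx
      rw [term_zero hsort hpos hx hnx, mul_zero]
  rw [hext, alg_key (range L) c hcinj]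
  have hsumc : ∑ i ∈ range L, c i = (n : ℚ) + (L.choose 2 : ℚ) := by
    have h1 := sum_bet l
    rw [hsum] at h1
    simp only [hc]
    rw [← Nat.cast_sum]
    rw [h1]
    push_cast
    ring
  rw [hsumc, Finset.card_range]
  have hnfac : (n.factorial : ℚ) = (n : ℚ) * ((n-1).factorial : ℚ) := by
    rw [← Nat.mul_factorial_pred (by omega)]
    push_cast
    ring
  rw [hnfac]
  field_simp
  ring
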